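/- arXiv:quant-ph/0608045 — 9 statements merged into one kernel-verified Lean document; each statement's English description precedes it below -/
import Mathlib

section
/- If Λ is a bistochastic matrix (all entries nonnegative, each row sums to 1, each column sums to 1) and p = Λq for probability vectors p and q, then p is majorised by q. -/
open Finset

/-- `p` is majorised by `q`: for every `k`, the sum of the `k` largest entries of `p`
is at most the sum of the `k` largest entries of `q` (expressed via subsets of
cardinality `k`), with equality of the total sums. -/
def Majorizes {n : ℕ} (p q : Fin n → ℝ) : Prop :=
  (∀ s : Finset (Fin n), ∃ t : Finset (Fin n), t.card = s.card ∧ ∑ i ∈ s, p i ≤ ∑ i ∈ t, q i)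
  ∧ ∑ i, p i = ∑ i, q i

lemma exists_topk {n : ℕ} (q : Fin n → ℝ) (k : ℕ) (hk : k ≤ n) :
    ∃ t : Finset (Fin n), t.card = k ∧ ∀ i ∈ t, ∀ j ∉ t, q j ≤ q i := by
  induction k with
  | zero => exact ⟨∅, rfl, by simp⟩
  | succ k ih =>
    obtain ⟨t, hcard, hprop⟩ := ih (Nat.le_of_succ_le hk)
    have hne : tᶜ.Nonempty := by
      rw [← Finset.card_pos, Finset.card_compl, hcard, Fintype.card_fin]
      omega
    obtain ⟨j0, hj0, hmax⟩ := tᶜ.exists_max_image q hne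
    rw [Finset.mem_compl] at hj0
    refine ⟨insert j0 t, by rw [Finset.card_insert_of_notMem hj0, hcard], ?_⟩
    intro i hi l hl
    rcases Finset.mem_insert.mp hi with rfl | hi
    · exact hmax l (Finset.mem_compl.mpr (fun h => hl (Finset.mem_insert_of_mem h)))
    · exact hprop i hi l (fun h => hl (Finset.mem_insert_of_mem h))

theorem bistochastic_output_majorised {n : ℕ} (Λ : Matrix (Fin n) (Fin n) ℝ)
    (hnonneg : ∀ i j, 0 ≤ Λ i j)
    (hrow : ∀ i, ∑ j, Λ i j = 1)
    (hcol : ∀ j, ∑ i, Λ i j = 1)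
    (p q : Fin n → ℝ)
    (hp : ∀ i, 0 ≤ p i) (hpsum : ∑ i, p i = 1)
    (hq : ∀ i, 0 ≤ q i) (hqsum : ∑ i, q i = 1)
    (hpq : p = Λ.mulVec q) :
    Majorizes p q := by
  constructor
  · intro s
    set c : Fin n → ℝ := fun j => ∑ i ∈ s, Λ i j with hc
    have hc0 : ∀ j, 0 ≤ c j := fun j => Finset.sum_nonneg fun i _ => hnonneg i j
    have hc1 : ∀ j, c j ≤ 1 := by
      intro j
      calc c j ≤ ∑ i, Λ i j :=
            Finset.sum_le_sum_of_subset_of_nonneg (Finset.subset_univ s)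
              (fun i _ _ => hnonneg i j)
        _ = 1 := hcol j
    have hcsum : ∑ j, c j = (s.card : ℝ) := by
      rw [Finset.sum_comm]
      simp [hrow]
    have hps : ∑ i ∈ s, p i = ∑ j, c j * q j := by
      subst hpq
      simp only [Matrix.mulVec, dotProduct, hc]
      rw [Finset.sum_comm]
      simp [Finset.sum_mul]
    obtain ⟨t, htcard, htop⟩ := exists_topk q s.card
      (by simpa using Finset.card_le_card (Finset.subset_univ s))
    refine ⟨t, htcard, ?_⟩
    rw [hps]
    rcases eq_or_ne tᶜ ∅ with hemp | hne
    · have ht : t = Finset.univ := by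
        rwa [Finset.compl_eq_empty_iff] at hemp
      rw [ht]
      exact Finset.sum_le_sum fun j _ => by
        nlinarith [hc1 j, hq j, hc0 j]
    · obtain ⟨j0, hj0, hmax⟩ := tᶜ.exists_max_image q (Finset.nonempty_iff_ne_empty.mpr hne)
      have hj0' : j0 ∉ t := Finset.mem_compl.mp hj0
      set m := q j0 with hm
      have hsplit : ∑ j, c j * q j = ∑ j ∈ t, c j * q j + ∑ j ∈ tᶜ, c j * q j :=
        (Finset.sum_add_sum_compl t _).symm
      have h1 : ∑ j ∈ tᶜ, c j * q j ≤ ∑ j ∈ tᶜ, c j * m :=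
        Finset.sum_le_sum fun j hj =>
          mul_le_mul_of_nonneg_left (hmax j hj) (hc0 j)
      have h2 : ∑ j ∈ t, (1 - c j) * m ≤ ∑ j ∈ t, (1 - c j) * q j :=
        Finset.sum_le_sum fun j hj =>
          mul_le_mul_of_nonneg_left (htop j hj j0 hj0') (by linarith [hc1 j])
      have h3 : ∑ j ∈ tᶜ, c j * m = ∑ j ∈ t, (1 - c j) * m := by
        have hsplit2 : ∑ j ∈ t, c j + ∑ j ∈ tᶜ, c j = (s.card : ℝ) := by
          rw [Finset.sum_add_sum_compl t c, hcsum]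
        have hcardt : ∑ j ∈ t, (1 : ℝ) = (s.card : ℝ) := by
          simp [htcard]
        rw [← Finset.sum_mul, ← Finset.sum_mul]
        congr 1
        rw [Finset.sum_sub_distrib, hcardt]
        linarith
      have h4 : ∑ j ∈ t, c j * q j + ∑ j ∈ t, (1 - c j) * q j = ∑ j ∈ t, q j := by
        rw [← Finset.sum_add_distrib]
        exact Finset.sum_congr rfl fun j _ => by ring
      linarith
  · rw [hpsum, hqsum]
end

section
/- Let E be a unital trace-preserving completely positive map (unital quantum channel) on the operators of a finite-dimensional Hilbert space, and let ρ = E(σ) for density operators ρ and σ. Then the spectrum of ρ (as a vector of eigenvalues) is majorised by the spectrum of σ. -/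
open Finset Matrix ComplexOrder

/-- Complete positivity via the existence of a Kraus representation. -/
def IsCP {I J : Type*} [Fintype I] [Fintype J]
    (E : Matrix I I ℂ →ₗ[ℂ] Matrix J J ℂ) : Prop :=
  ∃ (r : ℕ) (K : Fin r → Matrix J I ℂ), ∀ X, E X = ∑ a, K a * X * (K a)ᴴ

/-!
Diagonalise `ρ = U diag(p) U*` and `σ = V diag(q) V*`. For Kraus operators `Kₐ` of `E`, the
matrices `Mₐ = U* Kₐ V` satisfy `diag(p) = ∑ₐ Mₐ diag(q) Mₐ*`, so `p = B q` with
`B i j = ∑ₐ |Mₐ i j|²`. Unitality and trace preservation give `∑ₐ Mₐ Mₐ* = 1 = ∑ₐ Mₐ* Mₐ`,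
i.e. the row and column sums of `B` are `1`: `B` is doubly stochastic. Then a partial sum
`∑_{i ∈ s} pᵢ` equals `∑ⱼ cⱼ qⱼ` with weights `cⱼ ∈ [0, 1]` of total weight `|s|`, and such a
combination is at most the sum of the `|s|` largest values of `q`.
-/

section TopValues

variable {ι : Type*} [Fintype ι]

lemma exists_card_eq_forall_notMem_le {α : Type*} [LinearOrder α] (q : ι → α) {k : ℕ}
    (hk : k ≤ Fintype.card ι) : ∃ t : Finset ι, #t = k ∧ ∀ i ∈ t, ∀ j ∉ t, q j ≤ q i := by
  classical
  induction k with
  | zero => exact ⟨∅, by simp⟩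
  | succ k ih =>
    obtain ⟨t, rfl, ht⟩ := ih (by omega)
    have hne : tᶜ.Nonempty := by rw [← card_pos, card_compl]; omega
    obtain ⟨j₀, hj₀, hmax⟩ := tᶜ.exists_max_image q hne
    rw [mem_compl] at hj₀
    refine ⟨insert j₀ t, card_insert_of_notMem hj₀, fun i hi j hj => ?_⟩
    rw [mem_insert, not_or] at hj
    rcases mem_insert.mp hi with rfl | hi
    · exact hmax j (mem_compl.mpr hj.2)
    · exact ht i hi j hj.2

lemma exists_card_eq_sum_mul_le_sum (q c : ι → ℝ) (hc₀ : ∀ j, 0 ≤ c j) (hc₁ : ∀ j, c j ≤ 1)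
    {k : ℕ} (hk : ∑ j, c j = k) : ∃ t : Finset ι, #t = k ∧ ∑ j, c j * q j ≤ ∑ j ∈ t, q j := by
  classical
  have hk_le : k ≤ Fintype.card ι := by
    have : (k : ℝ) ≤ Fintype.card ι := by
      simpa [hk] using sum_le_sum fun j (_ : j ∈ univ) => hc₁ j
    exact_mod_cast this
  obtain ⟨t, rfl, ht⟩ := exists_card_eq_forall_notMem_le q hk_le
  refine ⟨t, rfl, ?_⟩
  rcases t.eq_empty_or_nonempty with rfl | hne
  · have hc : ∀ j, c j = 0 := by
      simpa [sum_eq_zero_iff_of_nonneg fun j _ => hc₀ j] using hk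
    simp [hc]
  · -- `m` separates the values on `t` from those off `t`, and `c - 𝟙ₜ` has total weight zero.
    set m := t.inf' hne q
    have hterm : ∀ j, c j * q j ≤
        (if j ∈ t then q j else 0) + (c j - if j ∈ t then 1 else 0) * m := by
      intro j
      split_ifs with hj
      · nlinarith [inf'_le q hj, hc₁ j]
      · nlinarith [le_inf' hne q fun i hi => ht i hi j hj, hc₀ j]
    calc ∑ j, c j * q j
        ≤ ∑ j, ((if j ∈ t then q j else 0) + (c j - if j ∈ t then 1 else 0) * m) :=
          sum_le_sum fun j _ => hterm j
      _ = ∑ j ∈ t, q j := by simp [sum_add_distrib, ← sum_mul, sum_sub_distrib, hk]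

end TopValues

lemma majorizes_mulVec_of_mem_doublyStochastic {n : ℕ} {B : Matrix (Fin n) (Fin n) ℝ}
    (hB : B ∈ doublyStochastic ℝ (Fin n)) (q : Fin n → ℝ) : Majorizes (B *ᵥ q) q := by
  refine ⟨fun s => ?_, sum_mulVec_of_mem_doublyStochastic hB⟩
  have hsum : ∑ i ∈ s, (B *ᵥ q) i = ∑ j, (∑ i ∈ s, B i j) * q j := by
    simp only [mulVec, dotProduct, sum_mul]
    exact sum_comm
  have hc₁ (j : Fin n) : ∑ i ∈ s, B i j ≤ 1 :=
    (sum_le_sum_of_subset_of_nonneg (subset_univ s) fun _ _ _ =>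
      nonneg_of_mem_doublyStochastic hB).trans_eq (sum_col_of_mem_doublyStochastic hB j)
  obtain ⟨t, ht, hle⟩ := exists_card_eq_sum_mul_le_sum (k := #s) q (fun j => ∑ i ∈ s, B i j)
    (fun j => sum_nonneg fun i _ => nonneg_of_mem_doublyStochastic hB) hc₁
    (by rw [sum_comm]; simp [sum_row_of_mem_doublyStochastic hB])
  exact ⟨t, ht, hsum ▸ hle⟩

section Kraus

variable {α m n : Type*} [Fintype α] [Fintype n]

def krausWeights (M : α → Matrix m n ℂ) : Matrix m n ℝ :=
  fun i j => ∑ a, Complex.normSq (M a i j)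

omit [Fintype n] in
lemma krausWeights_conjTranspose (M : α → Matrix m n ℂ) :
    krausWeights (fun a => (M a)ᴴ) = (krausWeights M)ᵀ := by
  ext i j
  simp [krausWeights]

lemma sum_mul_diagonal_mul_conjTranspose_apply_self [DecidableEq n] (M : α → Matrix m n ℂ)
    (q : n → ℝ) (i : m) :
    (∑ a, M a * diagonal (RCLike.ofReal ∘ q : n → ℂ) * (M a)ᴴ : Matrix m m ℂ) i i =
      ((krausWeights M *ᵥ q) i : ℂ) := by
  simp only [Matrix.sum_apply, mul_apply, diagonal_apply, mul_ite, mul_zero, sum_ite_eq',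
    mem_univ, if_true, krausWeights, mulVec, dotProduct, sum_mul, Complex.ofReal_sum,
    Complex.ofReal_mul, Complex.normSq_eq_conj_mul_self]
  rw [sum_comm]
  refine sum_congr rfl fun j _ => sum_congr rfl fun a _ => ?_
  simp only [Function.comp_apply, conjTranspose_apply, RCLike.star_def,
    RCLike.ofReal_eq_complex_ofReal]
  ring

lemma krausWeights_mem_doublyStochastic [DecidableEq n] {M : α → Matrix n n ℂ}
    (h₁ : ∑ a, M a * (M a)ᴴ = 1) (h₂ : ∑ a, (M a)ᴴ * M a = 1) :
    krausWeights M ∈ doublyStochastic ℝ n := by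
  have hrow (M : α → Matrix n n ℂ) (h : ∑ a, M a * (M a)ᴴ = 1) : krausWeights M *ᵥ 1 = 1 := by
    ext i
    have := sum_mul_diagonal_mul_conjTranspose_apply_self M 1 i
    simp [h] at this
    exact_mod_cast this.symm
  refine mem_doublyStochastic.2 ⟨fun i j => sum_nonneg fun a _ => Complex.normSq_nonneg _,
    hrow M h₁, ?_⟩
  simpa [krausWeights_conjTranspose, mulVec_transpose] using
    hrow (fun a => (M a)ᴴ) (by simpa using h₂)

lemma sum_conjTranspose_mul_self_eq_one_of_trace [Fintype m] [DecidableEq n]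
    {K : α → Matrix m n ℂ}
    (h : ∀ X : Matrix n n ℂ, (∑ a, K a * X * (K a)ᴴ : Matrix m m ℂ).trace = X.trace) :
    ∑ a, (K a)ᴴ * K a = 1 := by
  rw [ext_iff_trace_mul_right]
  intro X
  rw [one_mul, ← h X, sum_mul, trace_sum, trace_sum]
  exact sum_congr rfl fun a _ => by rw [Matrix.mul_assoc, trace_mul_comm]

lemma sum_unitary_conj_mul_conjTranspose [DecidableEq n] {K : α → Matrix n n ℂ}
    (hK : ∑ a, K a * (K a)ᴴ = 1) {U V : Matrix n n ℂ} (hU : U ∈ unitary (Matrix n n ℂ))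
    (hV : V ∈ unitary (Matrix n n ℂ)) :
    ∑ a, (star U * K a * V) * (star U * K a * V)ᴴ = 1 := by
  have hconj (a : α) :
      (star U * K a * V) * (star U * K a * V)ᴴ = star U * (K a * (K a)ᴴ) * U := by
    calc _ = star U * K a * (V * star V) * (K a)ᴴ * U := by
          simp only [conjTranspose_mul, star_eq_conjTranspose, conjTranspose_conjTranspose,
            Matrix.mul_assoc]
      _ = _ := by simp only [Unitary.mul_star_self_of_mem hV, Matrix.mul_one, Matrix.mul_assoc]
  rw [sum_congr rfl fun a _ => hconj a, ← sum_mul, ← mul_sum, hK, Matrix.mul_one,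
    Unitary.star_mul_self_of_mem hU]

lemma sum_unitary_conj_conjTranspose_mul [DecidableEq n] {K : α → Matrix n n ℂ}
    (hK : ∑ a, (K a)ᴴ * K a = 1) {U V : Matrix n n ℂ} (hU : U ∈ unitary (Matrix n n ℂ))
    (hV : V ∈ unitary (Matrix n n ℂ)) :
    ∑ a, (star U * K a * V)ᴴ * (star U * K a * V) = 1 := by
  have h := sum_unitary_conj_mul_conjTranspose (K := fun a => (K a)ᴴ) (by simpa using hK) hV hU
  simpa only [conjTranspose_mul, star_eq_conjTranspose, conjTranspose_conjTranspose,
    Matrix.mul_assoc] using h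

lemma star_mul_sum_mul_conj_mul [Fintype m] (U : Matrix m m ℂ) (V D : Matrix n n ℂ)
    (K : α → Matrix m n ℂ) :
    star U * (∑ a, K a * (V * D * star V) * (K a)ᴴ) * U =
      ∑ a, (star U * K a * V) * D * (star U * K a * V)ᴴ := by
  simp only [mul_sum, sum_mul, conjTranspose_mul, star_eq_conjTranspose,
    conjTranspose_conjTranspose, Matrix.mul_assoc]

lemma eigenvalues_eq_krausWeights_mulVec [DecidableEq n] {A B : Matrix n n ℂ}
    (hA : A.IsHermitian) (hB : B.IsHermitian) {K : α → Matrix n n ℂ}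
    (h : A = ∑ a, K a * B * (K a)ᴴ) :
    hA.eigenvalues = krausWeights (fun a => star (hA.eigenvectorUnitary : Matrix n n ℂ) * K a *
      (hB.eigenvectorUnitary : Matrix n n ℂ)) *ᵥ hB.eigenvalues := by
  have hAU := (Unitary.conjStarAlgAut_star_apply ..).symm.trans
    hA.conjStarAlgAut_star_eigenvectorUnitary
  have hBV := hB.spectral_theorem.trans (Unitary.conjStarAlgAut_apply ..)
  set U : Matrix n n ℂ := ↑hA.eigenvectorUnitary
  conv_lhs at hAU => rw [h, hBV]
  funext i
  have := congrFun (congrFun hAU i) i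
  rw [star_mul_sum_mul_conj_mul, sum_mul_diagonal_mul_conjTranspose_apply_self,
    diagonal_apply_eq] at this
  simpa using this.symm

end Kraus

theorem unital_channel_spectrum_majorised_general {n : ℕ}
    (E : Matrix (Fin n) (Fin n) ℂ →ₗ[ℂ] Matrix (Fin n) (Fin n) ℂ)
    (hCP : IsCP E)
    (hTP : ∀ X, (E X).trace = X.trace)
    (hU : E 1 = 1)
    (ρ σ : Matrix (Fin n) (Fin n) ℂ)
    (hρ : ρ.PosSemidef)
    (hσ : σ.PosSemidef)
    (h : ρ = E σ) :
    Majorizes hρ.1.eigenvalues hσ.1.eigenvalues := by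
  obtain ⟨r, K, hK⟩ := hCP
  have hKK : ∑ a, K a * (K a)ᴴ = 1 := by simpa [hU] using (hK 1).symm
  have hKK' : ∑ a, (K a)ᴴ * K a = 1 :=
    sum_conjTranspose_mul_self_eq_one_of_trace fun X => hK X ▸ hTP X
  have hUρ := hρ.1.eigenvectorUnitary.2
  have hVσ := hσ.1.eigenvectorUnitary.2
  rw [eigenvalues_eq_krausWeights_mulVec hρ.1 hσ.1 (h.trans (hK σ))]
  exact majorizes_mulVec_of_mem_doublyStochastic (krausWeights_mem_doublyStochastic
    (sum_unitary_conj_mul_conjTranspose hKK hUρ hVσ)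
    (sum_unitary_conj_conjTranspose_mul hKK' hUρ hVσ)) _

theorem unital_channel_spectrum_majorised {n : ℕ}
    (E : Matrix (Fin n) (Fin n) ℂ →ₗ[ℂ] Matrix (Fin n) (Fin n) ℂ)
    (hCP : IsCP E)
    (hTP : ∀ X, (E X).trace = X.trace)
    (hU : E 1 = 1)
    (ρ σ : Matrix (Fin n) (Fin n) ℂ)
    (hρ : ρ.PosSemidef) (hρtr : ρ.trace = 1)
    (hσ : σ.PosSemidef) (hσtr : σ.trace = 1)
    (h : ρ = E σ) :
    Majorizes hρ.1.eigenvalues hσ.1.eigenvalues :=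
  unital_channel_spectrum_majorised_general E hCP hTP hU ρ σ hρ hσ h
end

section
/- If E is a unital trace-preserving completely positive map on operators of a finite-dimensional Hilbert space and P is an orthogonal projection, then rank(E(P)) ≥ rank(P). -/
open Finset Matrix ComplexOrder

/-!
A Kraus representation makes `E` monotone for the Loewner order, so `0 ≤ P ≤ 1` gives
`0 ≤ E P ≤ E 1 = 1`. So `E P` is Hermitian with eigenvalues at most `1`, hence its trace is at
most its rank, while the trace of the projection `P` is its rank; trace preservation links the two.
-/

open scoped MatrixOrder

theorem IsCP.monotone {I J : Type*} [Fintype I] [Fintype J]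
    {E : Matrix I I ℂ →ₗ[ℂ] Matrix J J ℂ} (hE : IsCP E) : Monotone E := by
  obtain ⟨r, K, hK⟩ := hE
  intro X Y hXY
  rw [← sub_nonneg, ← map_sub, hK, nonneg_iff_posSemidef]
  exact posSemidef_sum _ fun a _ =>
    (nonneg_iff_posSemidef.mp (sub_nonneg.mpr hXY)).mul_mul_conjTranspose_same (K a)

namespace Matrix

variable {n 𝕜 : Type*} [Fintype n] [DecidableEq n]

theorem rank_eq_trace_of_isIdempotentElem [Field 𝕜] {A : Matrix n n 𝕜} (hA : IsIdempotentElem A) :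
    (A.rank : 𝕜) = A.trace := by
  have h : IsIdempotentElem (toLin' A) := hA.map toLinAlgEquiv'
  rw [← trace_toLin'_eq, (LinearMap.IsIdempotentElem.isProj_range _ h).trace]
  rfl

variable [RCLike 𝕜] {A : Matrix n n 𝕜}

theorem IsHermitian.eigenvalues_le_one (hA : A.IsHermitian) (h : A ≤ 1) (i : n) :
    hA.eigenvalues i ≤ 1 :=
  (le_algebraMap_iff_spectrum_le (R := ℝ) hA.isSelfAdjoint).mp (by rw [map_one]; exact h) _
    (hA.eigenvalues_mem_spectrum_real i)

theorem IsHermitian.re_trace_le_rank (hA : A.IsHermitian) (h : A ≤ 1) :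
    RCLike.re A.trace ≤ A.rank := by
  have htr : RCLike.re A.trace = ∑ i, hA.eigenvalues i := by
    simp [hA.trace_eq_sum_eigenvalues]
  rw [htr, hA.rank_eq_card_non_zero_eigs, Fintype.card_subtype, ← sum_filter_ne_zero]
  calc ∑ i ∈ univ with hA.eigenvalues i ≠ 0, hA.eigenvalues i
      ≤ ∑ i ∈ univ with hA.eigenvalues i ≠ 0, (1 : ℝ) :=
        sum_le_sum fun i _ => hA.eigenvalues_le_one h i
    _ = _ := by simp

end Matrix

theorem unital_channel_rank_increases {n : ℕ}
    (E : Matrix (Fin n) (Fin n) ℂ →ₗ[ℂ] Matrix (Fin n) (Fin n) ℂ)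
    (hCP : IsCP E)
    (hTP : ∀ X, (E X).trace = X.trace)
    (hU : E 1 = 1)
    (P : Matrix (Fin n) (Fin n) ℂ)
    (hPh : P.IsHermitian) (hPP : P * P = P) :
    P.rank ≤ (E P).rank := by
  have hP : IsStarProjection P := ⟨hPP, hPh⟩
  have hEP : (E P).IsHermitian :=
    (nonneg_iff_posSemidef.mp (map_zero E ▸ hCP.monotone hP.nonneg)).isHermitian
  have hEP_le : E P ≤ 1 := hU ▸ hCP.monotone hP.le_one
  have key : (P.rank : ℝ) ≤ (E P).rank :=
    calc (P.rank : ℝ) = RCLike.re P.trace := by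
          rw [← rank_eq_trace_of_isIdempotentElem hP.isIdempotentElem, RCLike.natCast_re]
      _ = RCLike.re (E P).trace := by rw [hTP]
      _ ≤ (E P).rank := hEP.re_trace_le_rank hEP_le
  exact_mod_cast key
end

section
/- Let E be a unital trace-preserving completely positive map on operators of a finite-dimensional Hilbert space and P an orthogonal projection. If rank(E(P)) = rank(P), then E(P) is an orthogonal projection. -/
open Finset Matrix ComplexOrder

/-!
A unital positive map sends the projection `P` into the operator interval `0 ≤ E P ≤ 1`, so
`E P` is Hermitian with eigenvalues `λᵢ ≤ 1`. Trace preservation and the rank hypothesis give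
`∑ λᵢ = tr P = rank P = #{i | λᵢ ≠ 0}`, and since each `λᵢ ≤ 1` this forces every nonzero `λᵢ`
to be `1`. A Hermitian matrix with spectrum in `{0, 1}` is a projection.
-/

open scoped MatrixOrder

namespace Matrix.IsHermitian

variable {n 𝕜 : Type*} [RCLike 𝕜] [Fintype n] [DecidableEq n] {A : Matrix n n 𝕜}

theorem isIdempotentElem_iff_eigenvalues (hA : A.IsHermitian) :
    IsIdempotentElem A ↔ ∀ i, hA.eigenvalues i = 0 ∨ hA.eigenvalues i = 1 := by
  rw [isIdempotentElem_iff_spectrum_subset ℝ A hA.isSelfAdjoint,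
    hA.spectrum_real_eq_range_eigenvalues, Set.range_subset_iff]
  simp only [Set.mem_insert_iff, Set.mem_singleton_iff]

theorem eigenvalues_le_one_s3 (hA : A.IsHermitian) (hle : A ≤ 1) (i : n) :
    hA.eigenvalues i ≤ 1 :=
  (CFC.le_one_iff A hA.isSelfAdjoint).mp hle _ (hA.eigenvalues_mem_spectrum_real i)

theorem trace_eq_rank_of_isIdempotentElem (hA : A.IsHermitian) (hAA : IsIdempotentElem A) :
    A.trace = A.rank := by
  have hcoe : ∀ i, (hA.eigenvalues i : 𝕜) = if hA.eigenvalues i ≠ 0 then 1 else 0 := by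
    intro i
    rcases (hA.isIdempotentElem_iff_eigenvalues.mp hAA) i with h | h <;> simp [h]
  rw [hA.trace_eq_sum_eigenvalues, hA.rank_eq_card_non_zero_eigs, Fintype.card_subtype]
  simp only [hcoe, sum_boole]

theorem isIdempotentElem_of_le_one_of_trace_eq_rank (hA : A.IsHermitian) (hle : A ≤ 1)
    (htr : A.trace = A.rank) : IsIdempotentElem A := by
  set S := ({i | hA.eigenvalues i ≠ 0} : Finset n)
  have hsum : ∑ i ∈ S, hA.eigenvalues i = ∑ i ∈ S, 1 := by
    rw [sum_filter_ne_zero, sum_const, nsmul_one, ← Fintype.card_subtype,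
      ← hA.rank_eq_card_non_zero_eigs]
    rw [hA.trace_eq_sum_eigenvalues] at htr
    exact_mod_cast htr
  rw [hA.isIdempotentElem_iff_eigenvalues]
  refine fun i ↦ or_iff_not_imp_left.mpr fun hi ↦ ?_
  exact (sum_eq_sum_iff_of_le fun j _ ↦ hA.eigenvalues_le_one_s3 hle j).mp hsum i
    (mem_filter.mpr ⟨mem_univ i, hi⟩)

end Matrix.IsHermitian

theorem unital_channel_rank_saturation_projection {n : ℕ}
    (E : Matrix (Fin n) (Fin n) ℂ →ₗ[ℂ] Matrix (Fin n) (Fin n) ℂ)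
    (hCP : IsCP E)
    (hTP : ∀ X, (E X).trace = X.trace)
    (hU : E 1 = 1)
    (P : Matrix (Fin n) (Fin n) ℂ)
    (hPh : P.IsHermitian) (hPP : P * P = P)
    (hrank : (E P).rank = P.rank) :
    (E P).IsHermitian ∧ E P * E P = E P := by
  have hP : IsStarProjection P := ⟨hPP, hPh⟩
  have hnonneg : 0 ≤ E P := map_zero E ▸ hCP.monotone hP.nonneg
  have hle : E P ≤ 1 := hU ▸ hCP.monotone hP.le_one
  have hQ : (E P).IsHermitian := (nonneg_iff_posSemidef.mp hnonneg).isHermitian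
  refine ⟨hQ, hQ.isIdempotentElem_of_le_one_of_trace_eq_rank hle ?_⟩
  rw [hTP, hrank, hPh.trace_eq_rank_of_isIdempotentElem hPP]
end

section
/- Let O be a positivity-preserving linear superoperator on operators of a finite-dimensional Hilbert space, P an orthogonal projection, and P(·) = P(·)P the associated projection superoperator. Then P∘O∘P = O∘P (as superoperators) if and only if the support of O(P) is contained in the range of P. -/
/-!
If `O(P)` is supported in `range P`, then `O(P) (1 - P) = 0`. For `X ≥ 0` choose `c` with
`X ≤ c • 1`; positivity of `O` gives `0 ≤ O(PXP) ≤ c • O(P)`, so `O(PXP)` vanishes on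
`ker O(P) ⊇ range (1 - P)` and, being Hermitian, is fixed by compression with `P`. Positive
semidefinite matrices span all matrices, so the identity extends to every `X` by linearity.
Conversely, taking `X = 1` shows `O(P) = P O(P) P`, whose range lies in `range P`.
-/

open Matrix ComplexOrder

namespace Matrix

variable {n : Type*} [Fintype n]

open scoped MatrixOrder Matrix.Norms.L2Operator in
theorem span_posSemidef [DecidableEq n] :
    Submodule.span ℂ {X : Matrix n n ℂ | X.PosSemidef} = ⊤ := by
  simpa only [nonneg_iff_posSemidef] using CStarAlgebra.span_nonneg (A := Matrix n n ℂ)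

open scoped MatrixOrder Matrix.Norms.L2Operator in
theorem IsHermitian.exists_posSemidef_smul_one_sub [DecidableEq n] {X : Matrix n n ℂ}
    (hX : X.IsHermitian) : ∃ c : ℝ, ((c : ℂ) • 1 - X).PosSemidef := by
  refine ⟨‖X‖, ?_⟩
  have hle := hX.isSelfAdjoint.le_algebraMap_norm_self
  rwa [le_iff, Algebra.algebraMap_eq_smul_one, ← Complex.coe_smul] at hle

theorem PosSemidef.mul_eq_zero_of_posSemidef_sub {𝕜 : Type*} [RCLike 𝕜] {A B Q : Matrix n n 𝕜}
    (hA : A.PosSemidef) (hBA : (B - A).PosSemidef) (hBQ : B * Q = 0) : A * Q = 0 := by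
  refine ext_iff_mulVec.mpr fun v => ?_
  set x := Q *ᵥ v
  have hBx : B *ᵥ x = 0 := by rw [mulVec_mulVec, hBQ, zero_mulVec]
  have hle := hBA.dotProduct_mulVec_nonneg x
  rw [sub_mulVec, dotProduct_sub, hBx, dotProduct_zero, zero_sub, neg_nonneg] at hle
  rw [← mulVec_mulVec, zero_mulVec]
  exact (hA.dotProduct_mulVec_zero_iff x).mp (le_antisymm hle (hA.dotProduct_mulVec_nonneg x))

theorem IsHermitian.mul_eq_self_iff {α : Type*} [CommRing α] [StarRing α] {A P : Matrix n n α}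
    (hA : A.IsHermitian) (hP : P.IsHermitian) : A * P = A ↔ P * A = A := by
  rw [← conjTranspose_inj, conjTranspose_mul, hA.eq, hP.eq]

theorem range_mulVecLin_le_iff {R : Type*} [CommRing R] {A P : Matrix n n R}
    (hP : IsIdempotentElem P) :
    LinearMap.range A.mulVecLin ≤ LinearMap.range P.mulVecLin ↔ P * A = A := by
  have hP' : IsIdempotentElem P.mulVecLin := by
    rw [IsIdempotentElem, Module.End.mul_eq_comp, ← mulVecLin_mul, hP.eq]
  rw [← LinearMap.IsIdempotentElem.comp_eq_right_iff hP', ← mulVecLin_mul]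
  simp only [LinearMap.ext_iff, mulVecLin_apply, ← ext_iff_mulVec]

theorem compress_map_compress_of_posSemidef [DecidableEq n]
    {O : Matrix n n ℂ →ₗ[ℂ] Matrix n n ℂ} (hO : ∀ X, X.PosSemidef → (O X).PosSemidef)
    {P : Matrix n n ℂ} (hP : P.IsHermitian) (hPP : IsIdempotentElem P) (hOP : O P * P = O P)
    {X : Matrix n n ℂ} (hX : X.PosSemidef) : P * O (P * X * P) * P = O (P * X * P) := by
  obtain ⟨c, hc⟩ := hX.isHermitian.exists_posSemidef_smul_one_sub
  have hA : (O (P * X * P)).PosSemidef := by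
    simpa only [hP.eq] using hO _ (hX.mul_mul_conjTranspose_same P)
  have hAc : ((c : ℂ) • O P - O (P * X * P)).PosSemidef := by
    have hcP := hO _ (hc.mul_mul_conjTranspose_same P)
    rwa [hP.eq, mul_sub, sub_mul, mul_smul_comm, mul_one, smul_mul_assoc, hPP.eq, map_sub,
      map_smul] at hcP
  have hOPQ : ((c : ℂ) • O P) * (1 - P) = 0 := by
    rw [smul_mul_assoc, mul_sub, mul_one, hOP, sub_self, smul_zero]
  have hAP : O (P * X * P) * P = O (P * X * P) := by
    have hAQ := hA.mul_eq_zero_of_posSemidef_sub hAc hOPQ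
    rwa [mul_sub, mul_one, sub_eq_zero, eq_comm] at hAQ
  rw [(hA.isHermitian.mul_eq_self_iff hP).mp hAP, hAP]

end Matrix

theorem pos_superop_compression_iff_support {n : ℕ}
    (O : Matrix (Fin n) (Fin n) ℂ →ₗ[ℂ] Matrix (Fin n) (Fin n) ℂ)
    (hO : ∀ X : Matrix (Fin n) (Fin n) ℂ, X.PosSemidef → (O X).PosSemidef)
    (P : Matrix (Fin n) (Fin n) ℂ)
    (hPh : P.IsHermitian) (hPP : P * P = P) :
    (∀ X : Matrix (Fin n) (Fin n) ℂ, P * O (P * X * P) * P = O (P * X * P)) ↔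
      LinearMap.range (O P).mulVecLin ≤ LinearMap.range P.mulVecLin := by
  rw [range_mulVecLin_le_iff hPP]
  constructor
  · intro h
    have hOP := h 1
    rw [mul_one, hPP] at hOP
    rw [← hOP, ← mul_assoc, ← mul_assoc, hPP]
  · intro hPOP
    have hPpsd : P.PosSemidef := by
      simpa only [hPh.eq, hPP] using posSemidef_conjTranspose_mul_self P
    have hOP := ((hO P hPpsd).isHermitian.mul_eq_self_iff hPh).mpr hPOP
    have hcompress : LinearMap.mulLeftRight ℂ (P, P) ∘ₗ O ∘ₗ LinearMap.mulLeftRight ℂ (P, P) =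
        O ∘ₗ LinearMap.mulLeftRight ℂ (P, P) :=
      LinearMap.ext_on span_posSemidef fun X hX => by
        simpa only [LinearMap.comp_apply, LinearMap.mulLeftRight_apply] using
          compress_map_compress_of_posSemidef hO hPh hPP hOP hX
    intro X
    simpa only [LinearMap.comp_apply, LinearMap.mulLeftRight_apply] using
      LinearMap.congr_fun hcompress X
end

section
/- Let E be a unital trace-preserving completely positive map on a finite-dimensional Hilbert space and P an orthogonal projection such that E†∘E(P) = P (where E† is the Hilbert-Schmidt adjoint). Then rank(E(P)) = rank(P). -/
/-!
Put `Q = E P`. Positivity of `E` applied to the projections `P` and `1 - P` gives `0 ≤ Q ≤ 1`,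
hence `Q - Q² = √Q (1 - Q) √Q ≥ 0`. On the other hand `Tr Q² = Tr (E†(Q) P) = Tr P² = Tr P = Tr Q`,
so `Q - Q²` is a positive semidefinite matrix of trace zero, i.e. `Q` is a projection. The rank of
a projection is its trace, and `E` preserves traces.
-/

open Finset Matrix ComplexOrder

theorem Matrix.trace_eq_rank_of_isIdempotentElem {K n : Type*} [Field K] [Fintype n]
    [DecidableEq n] {A : Matrix n n K} (hA : IsIdempotentElem A) : A.trace = A.rank := by
  have hA' : IsIdempotentElem A.toLin' := by
    rw [IsIdempotentElem, Module.End.mul_eq_comp, ← toLin'_mul, hA.eq]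
  rw [← trace_toLin'_eq, (LinearMap.IsIdempotentElem.isProj_range _ hA').trace, Matrix.rank,
    toLin'_apply']

theorem Matrix.IsHermitian.posSemidef_of_isIdempotentElem {n 𝕜 : Type*} [Fintype n] [RCLike 𝕜]
    {A : Matrix n n 𝕜} (hA : A.IsHermitian) (hA' : IsIdempotentElem A) : A.PosSemidef := by
  simpa only [hA.eq, hA'.eq] using posSemidef_self_mul_conjTranspose A

theorem IsCP.map_posSemidef {I J : Type*} [Fintype I] [Fintype J]
    {E : Matrix I I ℂ →ₗ[ℂ] Matrix J J ℂ} (hE : IsCP E) {X : Matrix I I ℂ} (hX : X.PosSemidef) :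
    (E X).PosSemidef := by
  obtain ⟨r, K, hK⟩ := hE
  rw [hK]
  exact posSemidef_sum _ fun a _ => hX.mul_mul_conjTranspose_same (K a)

open scoped MatrixOrder in
theorem Matrix.PosSemidef.sub_mul_self {n 𝕜 : Type*} [Fintype n] [DecidableEq n] [RCLike 𝕜]
    {Q : Matrix n n 𝕜} (hQ : Q.PosSemidef) (hQ' : (1 - Q).PosSemidef) :
    (Q - Q * Q).PosSemidef := by
  set S := CFC.sqrt Q
  have hS : S * S = Q := CFC.sqrt_mul_sqrt_self Q hQ.nonneg
  have h : S * (1 - Q) * Sᴴ = Q - Q * Q := by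
    rw [(CFC.sqrt_nonneg Q).posSemidef.1.eq, Matrix.mul_sub, Matrix.sub_mul, Matrix.mul_one, hS]
    congr 1
    calc S * Q * S = (S * S) * (S * S) := by rw [← hS]; noncomm_ring
      _ = Q * Q := by rw [hS]
  rw [← h]
  exact hQ'.mul_mul_conjTranspose_same S

theorem Matrix.PosSemidef.isIdempotentElem_of_trace_mul_self {n 𝕜 : Type*} [Fintype n]
    [DecidableEq n] [RCLike 𝕜] {Q : Matrix n n 𝕜} (hQ : Q.PosSemidef) (hQ' : (1 - Q).PosSemidef)
    (htr : (Q * Q).trace = Q.trace) : IsIdempotentElem Q := by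
  have h := (hQ.sub_mul_self hQ').trace_eq_zero_iff.mp (by rw [trace_sub, htr, sub_self])
  exact (sub_eq_zero.mp h).symm

theorem rank_eq_of_adjoint_comp_fixes {n : ℕ}
    (E Edag : Matrix (Fin n) (Fin n) ℂ →ₗ[ℂ] Matrix (Fin n) (Fin n) ℂ)
    (hCP : IsCP E)
    (hTP : ∀ X, (E X).trace = X.trace)
    (hU : E 1 = 1)
    (hadj : ∀ σ τ : Matrix (Fin n) (Fin n) ℂ, (Edag σ * τ).trace = (σ * E τ).trace)
    (P : Matrix (Fin n) (Fin n) ℂ)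
    (hPh : P.IsHermitian) (hPP : P * P = P)
    (hfix : Edag (E P) = P) :
    (E P).rank = P.rank := by
  have hP : IsIdempotentElem P := hPP
  have hQ : (E P).PosSemidef := hCP.map_posSemidef (hPh.posSemidef_of_isIdempotentElem hP)
  have hQ' : (1 - E P).PosSemidef := by
    rw [← hU, ← map_sub]
    exact hCP.map_posSemidef ((isHermitian_one.sub hPh).posSemidef_of_isIdempotentElem hP.one_sub)
  have htr : (E P * E P).trace = (E P).trace := by
    rw [← hadj, hfix, hPP, hTP]
  have hQidem := hQ.isIdempotentElem_of_trace_mul_self hQ' htr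
  have hrank : ((E P).rank : ℂ) = P.rank := by
    rw [← trace_eq_rank_of_isIdempotentElem hQidem, ← trace_eq_rank_of_isIdempotentElem hP, hTP]
  exact_mod_cast hrank
end

section
/- Let E be a unital trace-preserving completely positive map on a finite-dimensional Hilbert space and P an orthogonal projection with rank(E(P)) = rank(P). Then E†∘E(P) = P. -/
open Finset Matrix ComplexOrder

/-!
Write `E X = ∑ₐ Kₐ X Kₐᴴ`, so that `E† σ = ∑ₐ Kₐᴴ σ Kₐ` and trace preservation reads
`∑ₐ Kₐᴴ Kₐ = 1`. The matrix `Q = E P` satisfies `0 ≤ Q ≤ 1` (as `E` is positive and unital), and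
`tr Q = tr P = rank P = rank Q`, so its eigenvalues lie in `[0, 1]` and as many of them are nonzero
as they sum to: `Q` is a projection. Then `tr (Q E(1 - P)) = tr (Q (1 - Q)) = 0` is a sum of
the nonnegative terms `‖Q Kₐ (1 - P)‖₂²`, so `Q Kₐ = Q Kₐ P`; symmetrically `Kₐ P = Q Kₐ P`.
Hence `Q Kₐ = Kₐ P` and `E† Q = ∑ₐ Kₐᴴ Kₐ P = P`.
-/

namespace Matrix

theorem trace_eq_rank_of_isIdempotentElem_s9 {n K : Type*} [Fintype n] [DecidableEq n] [Field K]
    {A : Matrix n n K} (hA : IsIdempotentElem A) : A.trace = A.rank := by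
  have hA' : IsIdempotentElem (toLin' A) := hA.map toLinAlgEquiv'
  rw [← trace_toLin'_eq, (LinearMap.IsIdempotentElem.isProj_range _ hA').trace]
  rfl

section Spectrum

variable {n 𝕜 : Type*} [Fintype n] [DecidableEq n] [RCLike 𝕜]

theorem IsHermitian.eigenvalues_le_one_s9 {Q : Matrix n n 𝕜} (hQ : Q.IsHermitian)
    (hQ1 : (1 - Q).PosSemidef) (i : n) : hQ.eigenvalues i ≤ 1 := by
  have hmem : 1 - hQ.eigenvalues i ∈ spectrum ℝ (1 - Q) := by
    rw [← map_one (algebraMap ℝ (Matrix n n 𝕜)), ← spectrum.singleton_sub_eq]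
    exact Set.sub_mem_sub rfl (hQ.eigenvalues_mem_spectrum_real i)
  obtain ⟨j, hj⟩ := hQ1.isHermitian.spectrum_real_eq_range_eigenvalues ▸ hmem
  linarith [hQ1.eigenvalues_nonneg j]

theorem PosSemidef.isIdempotentElem_of_trace_eq_rank {Q : Matrix n n 𝕜} (hQ : Q.PosSemidef)
    (hQ1 : (1 - Q).PosSemidef) (h : Q.trace = Q.rank) : IsIdempotentElem Q := by
  set μ := hQ.isHermitian.eigenvalues
  set S := univ.filter (fun i => μ i ≠ 0)
  have hsum : ∑ i, μ i = #S := by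
    rw [hQ.isHermitian.trace_eq_sum_eigenvalues, hQ.isHermitian.rank_eq_card_non_zero_eigs,
      Fintype.card_subtype] at h
    exact_mod_cast h
  have hdefect : ∑ i ∈ S, (1 - μ i) = 0 := by
    rw [sum_sub_distrib, sum_filter_ne_zero, hsum, sum_const, nsmul_one, sub_self]
  have hμ : ∀ i, μ i = 0 ∨ μ i = 1 := by
    intro i
    by_contra! hi
    have hdefect_i := (sum_eq_zero_iff_of_nonneg fun j _ =>
      sub_nonneg.2 (hQ.isHermitian.eigenvalues_le_one_s9 hQ1 j)).1 hdefect i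
        (mem_filter.2 ⟨mem_univ i, hi.1⟩)
    exact hi.2 (by linarith)
  rw [isIdempotentElem_iff_spectrum_subset ℝ Q hQ.isHermitian.isSelfAdjoint,
    hQ.isHermitian.spectrum_real_eq_range_eigenvalues]
  rintro _ ⟨i, rfl⟩
  exact hμ i

end Spectrum

section Kraus

variable {ι m n 𝕜 : Type*} [Fintype ι] [Fintype n] [RCLike 𝕜]

theorem IsStarProjection.posSemidef {P : Matrix n n 𝕜} (hP : IsStarProjection P) :
    P.PosSemidef := by
  have h := posSemidef_conjTranspose_mul_self P
  rwa [hP.isSelfAdjoint.isHermitian.eq, hP.isIdempotentElem.eq] at h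

def krausMap (K : ι → Matrix m n 𝕜) : Matrix n n 𝕜 →ₗ[𝕜] Matrix m m 𝕜 where
  toFun X := ∑ a, K a * X * (K a)ᴴ
  map_add' X Y := by simp only [Matrix.mul_add, Matrix.add_mul, sum_add_distrib]
  map_smul' c X := by simp only [Matrix.mul_smul, Matrix.smul_mul, smul_sum, RingHom.id_apply]

theorem krausMap_apply (K : ι → Matrix m n 𝕜) (X : Matrix n n 𝕜) :
    krausMap K X = ∑ a, K a * X * (K a)ᴴ :=
  rfl

variable [Fintype m]

theorem trace_mul_krausMap (K : ι → Matrix m n 𝕜) (σ : Matrix m m 𝕜) (τ : Matrix n n 𝕜) :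
    (σ * krausMap K τ).trace = (krausMap (fun a => (K a)ᴴ) σ * τ).trace := by
  simp only [krausMap_apply, conjTranspose_conjTranspose, mul_sum, sum_mul, trace_sum,
    Matrix.mul_assoc]
  refine sum_congr rfl fun a _ => ?_
  rw [trace_mul_comm (K a)ᴴ, Matrix.mul_assoc, Matrix.mul_assoc]

theorem PosSemidef.krausMap (K : ι → Matrix m n 𝕜) {X : Matrix n n 𝕜} (hX : X.PosSemidef) :
    (krausMap K X).PosSemidef :=
  posSemidef_sum _ fun a _ => hX.mul_mul_conjTranspose_same (K a)

theorem krausMap_conjTranspose_one [DecidableEq m] [DecidableEq n] {K : ι → Matrix m n 𝕜}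
    (hK : ∀ X, (krausMap K X).trace = X.trace) : krausMap (fun a => (K a)ᴴ) 1 = 1 := by
  refine ext_iff_trace_mul_right.2 fun τ => ?_
  rw [← trace_mul_krausMap, one_mul, one_mul, hK]

theorem mul_mul_eq_zero_of_trace_mul_krausMap_eq_zero {K : ι → Matrix m n 𝕜}
    {P : Matrix n n 𝕜} {Q : Matrix m m 𝕜} (hP : IsStarProjection P) (hQ : IsStarProjection Q)
    (h : (Q * krausMap K P).trace = 0) (a : ι) : Q * K a * P = 0 := by
  have hterm : ∀ a, (Q * K a * P * (Q * K a * P)ᴴ).trace = (Q * (K a * P * (K a)ᴴ)).trace := by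
    intro a
    calc (Q * K a * P * (Q * K a * P)ᴴ).trace = (Q * (K a * (P * P) * (K a)ᴴ) * Q).trace := by
          simp only [conjTranspose_mul, hP.isSelfAdjoint.isHermitian.eq,
            hQ.isSelfAdjoint.isHermitian.eq, Matrix.mul_assoc]
      _ = (Q * (K a * P * (K a)ᴴ)).trace := by
          rw [trace_mul_cycle, hQ.isIdempotentElem.eq, hP.isIdempotentElem.eq]
  simp only [krausMap_apply, mul_sum, trace_sum, ← hterm] at h
  refine trace_mul_conjTranspose_self_eq_zero_iff.1 ?_
  exact (sum_eq_zero_iff_of_nonneg fun a _ =>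
    (posSemidef_self_mul_conjTranspose _).trace_nonneg).1 h a (mem_univ a)

theorem mul_eq_mul_of_krausMap_eq [DecidableEq m] [DecidableEq n] {K : ι → Matrix m n 𝕜}
    {P : Matrix n n 𝕜} {Q : Matrix m m 𝕜} (hP : IsStarProjection P) (hQ : IsStarProjection Q)
    (hKP : krausMap K P = Q) (hK1 : krausMap K 1 = 1) (a : ι) : Q * K a = K a * P := by
  have hQ_perp : Q * K a * (1 - P) = 0 := by
    refine mul_mul_eq_zero_of_trace_mul_krausMap_eq_zero hP.one_sub hQ ?_ a
    rw [map_sub, hK1, hKP, hQ.mul_one_sub_self, trace_zero]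
  have hP_perp : (1 - Q) * K a * P = 0 := by
    refine mul_mul_eq_zero_of_trace_mul_krausMap_eq_zero hP hQ.one_sub ?_ a
    rw [hKP, hQ.one_sub_mul_self, trace_zero]
  rw [Matrix.mul_sub, Matrix.mul_one, sub_eq_zero] at hQ_perp
  rw [Matrix.sub_mul, Matrix.sub_mul, Matrix.one_mul, sub_eq_zero] at hP_perp
  rw [hQ_perp, hP_perp]

theorem krausMap_conjTranspose_krausMap_eq_self [DecidableEq m] [DecidableEq n]
    {K : ι → Matrix m n 𝕜} {P : Matrix n n 𝕜} (hTP : ∀ X, (krausMap K X).trace = X.trace)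
    (hK1 : krausMap K 1 = 1) (hP : IsStarProjection P) (hQ : IsStarProjection (krausMap K P)) :
    krausMap (fun a => (K a)ᴴ) (krausMap K P) = P := by
  have hKQ := mul_eq_mul_of_krausMap_eq hP hQ rfl hK1
  calc krausMap (fun a => (K a)ᴴ) (krausMap K P) = krausMap (fun a => (K a)ᴴ) 1 * P := by
        simp only [krausMap_apply (fun a => (K a)ᴴ), conjTranspose_conjTranspose,
          Matrix.mul_assoc, hKQ, Matrix.mul_one, sum_mul]
    _ = P := by rw [krausMap_conjTranspose_one hTP, Matrix.one_mul]

end Kraus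

end Matrix

theorem adjoint_comp_fixes_of_rank_eq {n : ℕ}
    (E Edag : Matrix (Fin n) (Fin n) ℂ →ₗ[ℂ] Matrix (Fin n) (Fin n) ℂ)
    (hCP : IsCP E)
    (hTP : ∀ X, (E X).trace = X.trace)
    (hU : E 1 = 1)
    (hadj : ∀ σ τ : Matrix (Fin n) (Fin n) ℂ, (Edag σ * τ).trace = (σ * E τ).trace)
    (P : Matrix (Fin n) (Fin n) ℂ)
    (hPh : P.IsHermitian) (hPP : P * P = P)
    (hrank : (E P).rank = P.rank) :
    Edag (E P) = P := by
  obtain ⟨r, K, hK⟩ := hCP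
  obtain rfl : E = krausMap K := LinearMap.ext hK
  have hP : IsStarProjection P := ⟨hPP, hPh.isSelfAdjoint⟩
  have hQ_psd := hP.posSemidef.krausMap K
  have hQ : IsStarProjection (krausMap K P) := by
    refine ⟨hQ_psd.isIdempotentElem_of_trace_eq_rank ?_ ?_, hQ_psd.isHermitian.isSelfAdjoint⟩
    · simpa only [map_sub, hU] using hP.one_sub.posSemidef.krausMap K
    · rw [hTP, hrank, trace_eq_rank_of_isIdempotentElem_s9 hP.isIdempotentElem]
  have hEdag : Edag (krausMap K P) = krausMap (fun a => (K a)ᴴ) (krausMap K P) :=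
    ext_iff_trace_mul_right.2 fun τ => by rw [hadj, trace_mul_krausMap]
  rw [hEdag]
  exact krausMap_conjTranspose_krausMap_eq_self hTP hU hP hQ
end

section
/- Let E be a completely positive trace-preserving map with Kraus operators {E_a}, and suppose there exists a positive superoperator G_A on L(H^A) such that P_AB ∘ E† ∘ E ∘ P_AB = G_A ⊗ id_B as superoperators on L(H^A ⊗ H^B) (where P_AB(σ) = P_AB σ P_AB for the projection P_AB onto H^A ⊗ H^B ⊆ H). Then there exist operators F_ab on H^A such that P_AB E_b† E_a P_AB = F_ab ⊗ I_B for all a, b. -/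
open Finset Matrix ComplexOrder Kronecker

/-- Index type for `H = (H^A ⊗ H^B) ⊕ K`. -/
abbrev HI (dA dB dK : ℕ) := (Fin dA × Fin dB) ⊕ Fin dK

/-- The orthogonal projection of `H` onto `H^A ⊗ H^B`. -/
def PAB (dA dB dK : ℕ) : Matrix (HI dA dB dK) (HI dA dB dK) ℂ :=
  Matrix.fromBlocks 1 0 0 0

/-- Embedding of operators on `H^A ⊗ H^B` as operators on `H` (zero on `K`). -/
def embedAB {dA dB dK : ℕ} (M : Matrix (Fin dA × Fin dB) (Fin dA × Fin dB) ℂ) :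
    Matrix (HI dA dB dK) (HI dA dB dK) ℂ :=
  Matrix.fromBlocks M 0 0 0

/-- Compression of an operator on `H` to the `H^A ⊗ H^B` corner. -/
def compress {dA dB dK : ℕ} (σ : Matrix (HI dA dB dK) (HI dA dB dK) ℂ) :
    Matrix (Fin dA × Fin dB) (Fin dA × Fin dB) ℂ :=
  fun p q => σ (Sum.inl p) (Sum.inl q)

/-- The superoperator `Φ ⊗ id_B` acting on operators of a tensor product. -/
def tensorIdFun {dA dC dB : ℕ}
    (Φ : Matrix (Fin dA) (Fin dA) ℂ →ₗ[ℂ] Matrix (Fin dC) (Fin dC) ℂ)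
    (M : Matrix (Fin dA × Fin dB) (Fin dA × Fin dB) ℂ) :
    Matrix (Fin dC × Fin dB) (Fin dC × Fin dB) ℂ :=
  fun p q => Φ (Matrix.of fun a a' => M (a, p.2) (a', q.2)) p.1 q.1

/-- Trace preservation. -/
def IsTP {I J : Type*} [Fintype I] [Fintype J]
    (E : Matrix I I ℂ →ₗ[ℂ] Matrix J J ℂ) : Prop :=
  ∀ X, (E X).trace = X.trace

section AuxLemmas

variable {dA dB dK : ℕ}

lemma compress_embedAB (M : Matrix (Fin dA × Fin dB) (Fin dA × Fin dB) ℂ) :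
    compress (embedAB (dK := dK) M) = M := rfl

lemma embedAB_mul (M N : Matrix (Fin dA × Fin dB) (Fin dA × Fin dB) ℂ) :
    embedAB (dK := dK) M * embedAB N = embedAB (M * N) := by
  simp [embedAB, Matrix.fromBlocks_multiply]

lemma embedAB_sum {ι : Type*} (s : Finset ι)
    (f : ι → Matrix (Fin dA × Fin dB) (Fin dA × Fin dB) ℂ) :
    embedAB (dK := dK) (∑ i ∈ s, f i) = ∑ i ∈ s, embedAB (f i) := by
  ext p q
  cases p <;> cases q <;> simp [embedAB, Matrix.sum_apply]

lemma P_mul_mul (X : Matrix (HI dA dB dK) (HI dA dB dK) ℂ) :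
    PAB dA dB dK * X * PAB dA dB dK = embedAB (compress X) := by
  conv_lhs => rw [← Matrix.fromBlocks_toBlocks X]
  simp [PAB, embedAB, Matrix.fromBlocks_multiply]
  rfl

lemma compress_conjTranspose (X : Matrix (HI dA dB dK) (HI dA dB dK) ℂ) :
    compress Xᴴ = (compress X)ᴴ := rfl

lemma kron_one_conjT (X : Matrix (Fin dB) (Fin dB) ℂ) :
    ((1 : Matrix (Fin dA) (Fin dA) ℂ) ⊗ₖ X)ᴴ = (1 : Matrix (Fin dA) (Fin dA) ℂ) ⊗ₖ Xᴴ := by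
  ext ⟨a, i⟩ ⟨b, j⟩
  simp [Matrix.kroneckerMap_apply, Matrix.conjTranspose_apply, Matrix.one_apply, star_mul',
    eq_comm, apply_ite (starRingEnd ℂ)]

lemma bimL (GA : Matrix (Fin dA) (Fin dA) ℂ →ₗ[ℂ] Matrix (Fin dA) (Fin dA) ℂ)
    (X : Matrix (Fin dB) (Fin dB) ℂ) (σ : Matrix (Fin dA × Fin dB) (Fin dA × Fin dB) ℂ) :
    tensorIdFun GA (((1 : Matrix (Fin dA) (Fin dA) ℂ) ⊗ₖ X) * σ)
      = ((1 : Matrix (Fin dA) (Fin dA) ℂ) ⊗ₖ X) * tensorIdFun GA σ := by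
  funext p q
  have hs : (Matrix.of fun a a' =>
        (((1 : Matrix (Fin dA) (Fin dA) ℂ) ⊗ₖ X) * σ) (a, p.2) (a', q.2))
      = ∑ k, X p.2 k • (Matrix.of fun a a' => σ (a, k) (a', q.2)) := by
    ext a a'
    simp [Matrix.mul_apply, Fintype.sum_prod_type, Matrix.one_apply, Matrix.sum_apply,
      ite_mul, mul_assoc]
  show GA _ p.1 q.1 = _
  rw [hs, map_sum]
  simp only [_root_.map_smul]
  rw [Matrix.mul_apply]
  simp [tensorIdFun, Matrix.sum_apply, Fintype.sum_prod_type, Matrix.one_apply, ite_mul,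
    mul_assoc]

lemma bimR (GA : Matrix (Fin dA) (Fin dA) ℂ →ₗ[ℂ] Matrix (Fin dA) (Fin dA) ℂ)
    (X : Matrix (Fin dB) (Fin dB) ℂ) (σ : Matrix (Fin dA × Fin dB) (Fin dA × Fin dB) ℂ) :
    tensorIdFun GA (σ * ((1 : Matrix (Fin dA) (Fin dA) ℂ) ⊗ₖ X))
      = tensorIdFun GA σ * ((1 : Matrix (Fin dA) (Fin dA) ℂ) ⊗ₖ X) := by
  funext p q
  have hs : (Matrix.of fun a a' =>
        (σ * ((1 : Matrix (Fin dA) (Fin dA) ℂ) ⊗ₖ X)) (a, p.2) (a', q.2))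
      = ∑ k, X k q.2 • (Matrix.of fun a a' => σ (a, p.2) (a', k)) := by
    ext a a'
    simp [Matrix.mul_apply, Fintype.sum_prod_type, Matrix.one_apply, Matrix.sum_apply,
      mul_ite, mul_comm]
  show GA _ p.1 q.1 = _
  rw [hs, map_sum]
  simp only [_root_.map_smul]
  rw [Matrix.mul_apply]
  simp [tensorIdFun, Matrix.sum_apply, Fintype.sum_prod_type, Matrix.one_apply, mul_ite,
    mul_comm]

lemma sum_mul_conjT_self_eq_zero {ι n m : Type*} [Fintype ι] [Fintype n] [Fintype m]
    (f : ι → Matrix m n ℂ) (h : ∑ i, f i * (f i)ᴴ = 0) (i : ι) : f i = 0 := by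
  ext x c
  have hx : ∑ j, ∑ d, f j x d * star (f j x d) = 0 := by
    have := congrFun (congrFun h x) x
    simpa [Matrix.sum_apply, Matrix.mul_apply, Matrix.conjTranspose_apply] using this
  have h1 : ∀ j ∈ Finset.univ (α := ι), (0:ℂ) ≤ ∑ d, f j x d * star (f j x d) :=
    fun j _ => Finset.sum_nonneg fun d _ => mul_star_self_nonneg _
  have h2 := (Finset.sum_eq_zero_iff_of_nonneg h1).mp hx i (Finset.mem_univ i)
  have h3 := (Finset.sum_eq_zero_iff_of_nonneg
    (fun d _ => mul_star_self_nonneg (f i x d))).mp h2 c (Finset.mem_univ c)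
  rcases mul_eq_zero.mp h3 with h4 | h4
  · simpa using h4
  · simpa using star_eq_zero.mp h4

lemma commutes_of_kraus {ι : Type*} [Fintype ι]
    (T : ι → Matrix (Fin dA × Fin dB) (Fin dA × Fin dB) ℂ)
    (GA : Matrix (Fin dA) (Fin dA) ℂ →ₗ[ℂ] Matrix (Fin dA) (Fin dA) ℂ)
    (key : ∀ σ, ∑ c, T c * σ * (T c)ᴴ = tensorIdFun GA σ)
    (X : Matrix (Fin dB) (Fin dB) ℂ) (c : ι) :
    T c * ((1 : Matrix (Fin dA) (Fin dA) ℂ) ⊗ₖ X)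
      = ((1 : Matrix (Fin dA) (Fin dA) ℂ) ⊗ₖ X) * T c := by
  set Y : Matrix (Fin dA × Fin dB) (Fin dA × Fin dB) ℂ :=
    (1 : Matrix (Fin dA) (Fin dA) ℂ) ⊗ₖ X with hY
  have hYH : Yᴴ = (1 : Matrix (Fin dA) (Fin dA) ℂ) ⊗ₖ Xᴴ := kron_one_conjT X
  have e2 : tensorIdFun GA Y = Y * tensorIdFun GA 1 := by
    conv_lhs => rw [show Y = Y * 1 from (mul_one Y).symm, hY, bimL]
  have e1 : tensorIdFun GA Yᴴ = tensorIdFun GA 1 * Yᴴ := by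
    conv_lhs => rw [show Yᴴ = 1 * Yᴴ from (one_mul _).symm, hYH, bimR]
    rw [← hYH]
  have e3 : tensorIdFun GA (Y * Yᴴ) = Y * (tensorIdFun GA 1 * Yᴴ) := by
    rw [← e1]
    conv_lhs => rw [hY, bimL]
  have hDDH : ∀ d, (T d * Y - Y * T d) * (T d * Y - Y * T d)ᴴ
      = T d * (Y * Yᴴ) * (T d)ᴴ - (T d * Y * (T d)ᴴ) * Yᴴ
        - Y * (T d * Yᴴ * (T d)ᴴ) + Y * (T d * 1 * (T d)ᴴ) * Yᴴ := by
    intro d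
    simp only [conjTranspose_sub, conjTranspose_mul, mul_one]
    noncomm_ring
  have hsum : ∑ d, (T d * Y - Y * T d) * (T d * Y - Y * T d)ᴴ = 0 := by
    simp only [hDDH]
    rw [Finset.sum_add_distrib, Finset.sum_sub_distrib, Finset.sum_sub_distrib,
      ← Finset.sum_mul, ← Finset.mul_sum, ← Finset.sum_mul, ← Finset.mul_sum,
      key (Y * Yᴴ), key Y, key Yᴴ, key 1, e1, e2, e3]
    noncomm_ring
  have := sum_mul_conjT_self_eq_zero (fun d => T d * Y - Y * T d) hsum c
  exact sub_eq_zero.mp this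

lemma eq_kron_of_commutes (j0 : Fin dB)
    (T : Matrix (Fin dA × Fin dB) (Fin dA × Fin dB) ℂ)
    (h : ∀ X : Matrix (Fin dB) (Fin dB) ℂ,
      T * ((1 : Matrix (Fin dA) (Fin dA) ℂ) ⊗ₖ X)
        = ((1 : Matrix (Fin dA) (Fin dA) ℂ) ⊗ₖ X) * T) :
    T = (Matrix.of fun x y => T (x, j0) (y, j0)) ⊗ₖ (1 : Matrix (Fin dB) (Fin dB) ℂ) := by
  have hent : ∀ (p q : Fin dB) (x y : Fin dA) (i j : Fin dB),
      (if q = j then T (x, i) (y, p) else 0) = (if p = i then T (x, q) (y, j) else 0) := by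
    intro p q x y i j
    have := congrFun (congrFun (h (Matrix.single p q 1)) (x, i)) (y, j)
    simpa [Matrix.mul_apply, Fintype.sum_prod_type, Matrix.kroneckerMap_apply,
      Matrix.one_apply, Matrix.single, ite_and, mul_ite, ite_mul,
      Finset.sum_ite_eq, Finset.sum_ite_eq'] using this
  ext ⟨x, i⟩ ⟨y, j⟩
  simp only [Matrix.kroneckerMap_apply, Matrix.of_apply, Matrix.one_apply]
  rcases eq_or_ne i j with rfl | hij
  · have := hent i j0 x y i j0
    simp only [if_pos rfl, if_true, eq_self_iff_true] at this
    simp [this]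
  · have := hent j j x y i j
    rw [if_pos rfl, if_neg (Ne.symm hij)] at this
    simp [hij, this]

end AuxLemmas

theorem testable_condition_kraus_form {dA dB dK m : ℕ}
    (K : Fin m → Matrix (HI dA dB dK) (HI dA dB dK) ℂ)
    (hchan : ∑ a, (K a)ᴴ * K a = 1)
    (GA : Matrix (Fin dA) (Fin dA) ℂ →ₗ[ℂ] Matrix (Fin dA) (Fin dA) ℂ)
    (hGApos : ∀ X : Matrix (Fin dA) (Fin dA) ℂ, X.PosSemidef → (GA X).PosSemidef)
    (htest : ∀ σ : Matrix (HI dA dB dK) (HI dA dB dK) ℂ,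
      PAB dA dB dK *
        (∑ a, (K a)ᴴ * (∑ b, K b * (PAB dA dB dK * σ * PAB dA dB dK) * (K b)ᴴ) * K a) *
        PAB dA dB dK
      = embedAB (tensorIdFun GA (compress σ))) :
    ∃ F : Fin m → Fin m → Matrix (Fin dA) (Fin dA) ℂ,
      ∀ a b, PAB dA dB dK * (K b)ᴴ * K a * PAB dA dB dK
        = embedAB (F a b ⊗ₖ (1 : Matrix (Fin dB) (Fin dB) ℂ)) := by
  have hterm : ∀ (σ' : Matrix (Fin dA × Fin dB) (Fin dA × Fin dB) ℂ) (a b : Fin m),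
      PAB dA dB dK * ((K a)ᴴ * (K b * (PAB dA dB dK * embedAB σ' * PAB dA dB dK) * (K b)ᴴ)
        * K a) * PAB dA dB dK
      = embedAB (compress ((K a)ᴴ * K b) * σ' * (compress ((K a)ᴴ * K b))ᴴ) := by
    intro σ' a b
    have hσ : PAB dA dB dK * embedAB σ' * PAB dA dB dK = embedAB σ' := by
      rw [P_mul_mul, compress_embedAB]
    rw [hσ]
    have h1 : PAB dA dB dK * ((K a)ᴴ * K b) * PAB dA dB dK
        = embedAB (compress ((K a)ᴴ * K b)) := P_mul_mul _
    have h2 : PAB dA dB dK * ((K b)ᴴ * K a) * PAB dA dB dK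
        = embedAB ((compress ((K a)ᴴ * K b))ᴴ) := by
      rw [P_mul_mul]
      congr 1
      rw [← compress_conjTranspose, Matrix.conjTranspose_mul,
        Matrix.conjTranspose_conjTranspose]
    calc PAB dA dB dK * ((K a)ᴴ * (K b * embedAB σ' * (K b)ᴴ) * K a) * PAB dA dB dK
        = (PAB dA dB dK * ((K a)ᴴ * K b) * PAB dA dB dK) * embedAB σ'
            * (PAB dA dB dK * ((K b)ᴴ * K a) * PAB dA dB dK) := by
          conv_lhs => rw [← hσ]
          simp only [mul_assoc]
      _ = embedAB (compress ((K a)ᴴ * K b) * σ' * (compress ((K a)ᴴ * K b))ᴴ) := by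
          rw [h1, h2, embedAB_mul, embedAB_mul]
  have key : ∀ σ' : Matrix (Fin dA × Fin dB) (Fin dA × Fin dB) ℂ,
      ∑ c : Fin m × Fin m,
        compress ((K c.1)ᴴ * K c.2) * σ' * (compress ((K c.1)ᴴ * K c.2))ᴴ
      = tensorIdFun GA σ' := by
    intro σ'
    have h := htest (embedAB σ')
    rw [compress_embedAB] at h
    have hL : PAB dA dB dK *
        (∑ a, (K a)ᴴ * (∑ b, K b * (PAB dA dB dK * embedAB σ' * PAB dA dB dK) * (K b)ᴴ) * K a)
        * PAB dA dB dK
        = embedAB (∑ a, ∑ b,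
            compress ((K a)ᴴ * K b) * σ' * (compress ((K a)ᴴ * K b))ᴴ) := by
      rw [Finset.mul_sum, Finset.sum_mul, embedAB_sum]
      refine Finset.sum_congr rfl fun a _ => ?_
      rw [embedAB_sum]
      rw [show (K a)ᴴ * (∑ b, K b * (PAB dA dB dK * embedAB σ' * PAB dA dB dK) * (K b)ᴴ) * K a
          = ∑ b, (K a)ᴴ * (K b * (PAB dA dB dK * embedAB σ' * PAB dA dB dK) * (K b)ᴴ) * K a
        from by rw [Finset.mul_sum, Finset.sum_mul]]
      rw [Finset.mul_sum, Finset.sum_mul]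
      exact Finset.sum_congr rfl fun b _ => hterm σ' a b
    rw [hL] at h
    have h' := congrArg compress h
    rw [compress_embedAB, compress_embedAB] at h'
    rw [Fintype.sum_prod_type]
    exact h'
  have hcomm := commutes_of_kraus
    (fun c : Fin m × Fin m => compress ((K c.1)ᴴ * K c.2)) GA key
  rcases Nat.eq_zero_or_pos dB with hdB | hdB
  · refine ⟨fun _ _ => 0, fun a b => ?_⟩
    rw [mul_assoc (PAB dA dB dK) ((K b)ᴴ) (K a), P_mul_mul]
    subst hdB
    refine congrArg embedAB ?_
    ext ⟨x, i⟩ ⟨y, j⟩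
    exact i.elim0
  · have j0 : Fin dB := ⟨0, hdB⟩
    refine ⟨fun a b =>
      Matrix.of (fun x y => compress ((K b)ᴴ * K a) (x, j0) (y, j0)), fun a b => ?_⟩
    rw [mul_assoc (PAB dA dB dK) ((K b)ᴴ) (K a), P_mul_mul]
    exact congrArg embedAB (eq_kron_of_commutes j0 _ (fun X => hcomm X (b, a)))
end

section
/- Let U be a unitary on C^4 with four distinct eigenvalues λ_1, λ_2, λ_3, λ_4 on the unit circle, with orthonormal eigenvectors ψ_1,...,ψ_4. Suppose λ = sλ_1 + (1−s)λ_3 = tλ_2 + (1−t)λ_4 for some s, t ∈ (0,1). Define |ψ⟩ = √s|ψ_1⟩ + √(1−s)|ψ_3⟩ and |φ⟩ = √t|ψ_2⟩ + √(1−t)|ψ_4⟩, and let P = |ψ⟩⟨ψ| + |φ⟩⟨φ|. Then P U P = λ P. -/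
open Matrix

lemma vmv_mul (a b c d : Fin 4 → ℂ) :
    Matrix.vecMulVec a b * Matrix.vecMulVec c d = (b ⬝ᵥ c) • Matrix.vecMulVec a d := by
  ext i j
  simp only [Matrix.mul_apply, Matrix.vecMulVec_apply, Matrix.smul_apply, dotProduct,
    Finset.sum_mul, smul_eq_mul]
  exact Finset.sum_congr rfl fun k _ => by ring

theorem compression_of_binary_unitary_channel
    (ψ : Fin 4 → (Fin 4 → ℂ))
    (horth : ∀ i j, star (ψ i) ⬝ᵥ ψ j = if i = j then 1 else 0)
    (lam : Fin 4 → ℂ)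
    (hmod : ∀ j, ‖lam j‖ = 1)
    (hdist : Function.Injective lam)
    -- U = Σ_j λ_j |ψ_j⟩⟨ψ_j|
    (U : Matrix (Fin 4) (Fin 4) ℂ)
    (hU : U = ∑ j, lam j • Matrix.vecMulVec (ψ j) (star (ψ j)))
    (s t : ℝ) (hs : 0 < s) (hs1 : s < 1) (ht : 0 < t) (ht1 : t < 1)
    (μ : ℂ)
    (hμ1 : μ = (s : ℂ) * lam 0 + ((1 - s : ℝ) : ℂ) * lam 2)
    (hμ2 : μ = (t : ℂ) * lam 1 + ((1 - t : ℝ) : ℂ) * lam 3)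
    -- |ψ⟩ = √s |ψ_1⟩ + √(1-s) |ψ_3⟩ and |φ⟩ = √t |ψ_2⟩ + √(1-t) |ψ_4⟩
    (v w : Fin 4 → ℂ)
    (hv : v = (Real.sqrt s : ℂ) • ψ 0 + (Real.sqrt (1 - s) : ℂ) • ψ 2)
    (hw : w = (Real.sqrt t : ℂ) • ψ 1 + (Real.sqrt (1 - t) : ℂ) • ψ 3)
    -- P = |ψ⟩⟨ψ| + |φ⟩⟨φ|
    (P : Matrix (Fin 4) (Fin 4) ℂ)
    (hP : P = Matrix.vecMulVec v (star v) + Matrix.vecMulVec w (star w)) :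
    P * U * P = μ • P := by
  have hvd0 : star v ⬝ᵥ ψ 0 = (Real.sqrt s : ℂ) := by
    simp [hv, star_add, star_smul, add_dotProduct, smul_dotProduct, horth,
      Complex.star_def, Complex.conj_ofReal, smul_eq_mul]
  have hdv0 : star (ψ 0) ⬝ᵥ v = (Real.sqrt s : ℂ) := by
    simp [hv, dotProduct_add, dotProduct_smul, horth, smul_eq_mul]
  have hvd1 : star v ⬝ᵥ ψ 1 = 0 := by
    simp [hv, star_add, star_smul, add_dotProduct, smul_dotProduct, horth,
      Complex.star_def, Complex.conj_ofReal, smul_eq_mul]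
  have hdv1 : star (ψ 1) ⬝ᵥ v = 0 := by
    simp [hv, dotProduct_add, dotProduct_smul, horth, smul_eq_mul]
  have hvd2 : star v ⬝ᵥ ψ 2 = (Real.sqrt (1 - s) : ℂ) := by
    simp [hv, star_add, star_smul, add_dotProduct, smul_dotProduct, horth,
      Complex.star_def, Complex.conj_ofReal, smul_eq_mul]
  have hdv2 : star (ψ 2) ⬝ᵥ v = (Real.sqrt (1 - s) : ℂ) := by
    simp [hv, dotProduct_add, dotProduct_smul, horth, smul_eq_mul]
  have hvd3 : star v ⬝ᵥ ψ 3 = 0 := by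
    simp [hv, star_add, star_smul, add_dotProduct, smul_dotProduct, horth,
      Complex.star_def, Complex.conj_ofReal, smul_eq_mul]
  have hdv3 : star (ψ 3) ⬝ᵥ v = 0 := by
    simp [hv, dotProduct_add, dotProduct_smul, horth, smul_eq_mul]
  have hwd0 : star w ⬝ᵥ ψ 0 = 0 := by
    simp [hw, star_add, star_smul, add_dotProduct, smul_dotProduct, horth,
      Complex.star_def, Complex.conj_ofReal, smul_eq_mul]
  have hdw0 : star (ψ 0) ⬝ᵥ w = 0 := by
    simp [hw, dotProduct_add, dotProduct_smul, horth, smul_eq_mul]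
  have hwd1 : star w ⬝ᵥ ψ 1 = (Real.sqrt t : ℂ) := by
    simp [hw, star_add, star_smul, add_dotProduct, smul_dotProduct, horth,
      Complex.star_def, Complex.conj_ofReal, smul_eq_mul]
  have hdw1 : star (ψ 1) ⬝ᵥ w = (Real.sqrt t : ℂ) := by
    simp [hw, dotProduct_add, dotProduct_smul, horth, smul_eq_mul]
  have hwd2 : star w ⬝ᵥ ψ 2 = 0 := by
    simp [hw, star_add, star_smul, add_dotProduct, smul_dotProduct, horth,
      Complex.star_def, Complex.conj_ofReal, smul_eq_mul]
  have hdw2 : star (ψ 2) ⬝ᵥ w = 0 := by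
    simp [hw, dotProduct_add, dotProduct_smul, horth, smul_eq_mul]
  have hwd3 : star w ⬝ᵥ ψ 3 = (Real.sqrt (1 - t) : ℂ) := by
    simp [hw, star_add, star_smul, add_dotProduct, smul_dotProduct, horth,
      Complex.star_def, Complex.conj_ofReal, smul_eq_mul]
  have hdw3 : star (ψ 3) ⬝ᵥ w = (Real.sqrt (1 - t) : ℂ) := by
    simp [hw, dotProduct_add, dotProduct_smul, horth, smul_eq_mul]
  have ha : (Real.sqrt s : ℂ) * (Real.sqrt s : ℂ) = (s : ℂ) := by
    rw [← Complex.ofReal_mul, Real.mul_self_sqrt hs.le]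
  have hb : (Real.sqrt (1 - s) : ℂ) * (Real.sqrt (1 - s) : ℂ) = ((1 - s : ℝ) : ℂ) := by
    rw [← Complex.ofReal_mul, Real.mul_self_sqrt (by linarith)]
  have hc : (Real.sqrt t : ℂ) * (Real.sqrt t : ℂ) = (t : ℂ) := by
    rw [← Complex.ofReal_mul, Real.mul_self_sqrt ht.le]
  have hd : (Real.sqrt (1 - t) : ℂ) * (Real.sqrt (1 - t) : ℂ) = ((1 - t : ℝ) : ℂ) := by
    rw [← Complex.ofReal_mul, Real.mul_self_sqrt (by linarith)]
  rw [hU, hP]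
  simp only [Finset.mul_sum, Finset.sum_mul, mul_smul_comm, smul_mul_assoc, add_mul, mul_add,
    vmv_mul, Fin.sum_univ_four, hvd0, hdv0,hvd1, hdv1,hvd2, hdv2,hvd3, hdv3,hwd0, hdw0,hwd1, hdw1,hwd2, hdw2,hwd3, hdw3, smul_smul, smul_add]
  norm_num
  match_scalars
  · rw [hμ1]; linear_combination lam 0 * ha + lam 2 * hb
  · rw [hμ2]; linear_combination lam 1 * hc + lam 3 * hd
end
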